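/- arXiv:nlin/0601036 — 2 statements merged into one kernel-verified Lean document; each statement's English description precedes it below -/
import Mathlib

section
/- (Section 5 linearization.) Let w', v' : ℝ² → ℝ be smooth functions of (x',t) and set u' := w'_{x'}. Suppose u' vanishes nowhere, w'_t = −u'_{x'}, and v'_t = v'_{x'x'}. Suppose the map Φ : ℝ² → ℝ², Φ(x',t) = (w'(x',t), t), is a bijection with smooth inverse. Define w : ℝ² → ℝ as the first component of Φ⁻¹ (so that w'(w(x,t), t) = x for all (x,t)), and define u(x,t) := 1/u'(w(x,t), t) and v(x,t) := v'(w(x,t), t). Then (u, w, v) satisfies the nonlinear first-generation potential system w_x = u, w_t = −u⁻²·u_x, v_t = ∂_x[u⁻²·v_x]; consequently u and v satisfy the nonlinear diffusion system u_t = −∂_x[u⁻²·u_x], v_t = ∂_x[u⁻²·v_x]. -/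
open Matrix

/-- Partial derivative with respect to the first variable `x`. -/
noncomputable def pdx (f : ℝ × ℝ → ℝ) : ℝ × ℝ → ℝ :=
  fun p => deriv (fun x => f (x, p.2)) p.1

/-- Partial derivative with respect to the second variable `t`. -/
noncomputable def pdt (f : ℝ × ℝ → ℝ) : ℝ × ℝ → ℝ :=
  fun p => deriv (fun t => f (p.1, t)) p.2

/-- Second partial derivative with respect to the first variable. -/
noncomputable def pdxx (f : ℝ × ℝ → ℝ) : ℝ × ℝ → ℝ := pdx (pdx f)

lemma hasDerivAt_sliceX (f : ℝ × ℝ → ℝ) (hf : ContDiff ℝ (⊤ : ℕ∞) f) (x t : ℝ) :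
    HasDerivAt (fun s => f (s, t)) (fderiv ℝ f (x, t) (1, 0)) x := by
  have h1 : HasDerivAt (fun s : ℝ => ((s, t) : ℝ × ℝ)) ((1 : ℝ), (0 : ℝ)) x :=
    (hasDerivAt_id x).prodMk (hasDerivAt_const x t)
  exact ((hf.differentiable (by simp) (x, t)).hasFDerivAt).comp_hasDerivAt x h1

lemma hasDerivAt_sliceT (f : ℝ × ℝ → ℝ) (hf : ContDiff ℝ (⊤ : ℕ∞) f) (x t : ℝ) :
    HasDerivAt (fun s => f (x, s)) (fderiv ℝ f (x, t) (0, 1)) t := by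
  have h1 : HasDerivAt (fun s : ℝ => ((x, s) : ℝ × ℝ)) ((0 : ℝ), (1 : ℝ)) t :=
    (hasDerivAt_const t x).prodMk (hasDerivAt_id t)
  exact ((hf.differentiable (by simp) (x, t)).hasFDerivAt).comp_hasDerivAt t h1

lemma pdx_eq (f : ℝ × ℝ → ℝ) (hf : ContDiff ℝ (⊤ : ℕ∞) f) (p : ℝ × ℝ) :
    pdx f p = fderiv ℝ f p (1, 0) := by
  have := (hasDerivAt_sliceX f hf p.1 p.2).deriv
  simpa [pdx] using this

lemma pdt_eq (f : ℝ × ℝ → ℝ) (hf : ContDiff ℝ (⊤ : ℕ∞) f) (p : ℝ × ℝ) :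
    pdt f p = fderiv ℝ f p (0, 1) := by
  have := (hasDerivAt_sliceT f hf p.1 p.2).deriv
  simpa [pdt] using this

lemma contDiff_pdx (f : ℝ × ℝ → ℝ) (hf : ContDiff ℝ (⊤ : ℕ∞) f) : ContDiff ℝ (⊤ : ℕ∞) (pdx f) := by
  have h : pdx f = fun p => fderiv ℝ f p (1, 0) := funext (pdx_eq f hf)
  rw [h]
  exact (hf.fderiv_right (by simp)).clm_apply contDiff_const

lemma contDiff_pdt (f : ℝ × ℝ → ℝ) (hf : ContDiff ℝ (⊤ : ℕ∞) f) : ContDiff ℝ (⊤ : ℕ∞) (pdt f) := by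
  have h : pdt f = fun p => fderiv ℝ f p (0, 1) := funext (pdt_eq f hf)
  rw [h]
  exact (hf.fderiv_right (by simp)).clm_apply contDiff_const

lemma clm_decomp (L : ℝ × ℝ →L[ℝ] ℝ) (a b : ℝ) :
    L (a, b) = a * L (1, 0) + b * L (0, 1) := by
  have h : ((a, b) : ℝ × ℝ) = a • ((1 : ℝ), (0 : ℝ)) + b • ((0 : ℝ), (1 : ℝ)) := by
    simp
  rw [h, map_add, _root_.map_smul, _root_.map_smul, smul_eq_mul, smul_eq_mul]

lemma mixed_partials (f : ℝ × ℝ → ℝ) (hf : ContDiff ℝ (⊤ : ℕ∞) f) (q : ℝ × ℝ) :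
    pdt (pdx f) q = pdx (pdt f) q := by
  have hF : ContDiff ℝ (⊤ : ℕ∞) (fderiv ℝ f) := hf.fderiv_right (by simp)
  have h1 : pdx f = fun p => fderiv ℝ f p (1, 0) := funext (pdx_eq f hf)
  have h2 : pdt f = fun p => fderiv ℝ f p (0, 1) := funext (pdt_eq f hf)
  have hg1 : ContDiff ℝ (⊤ : ℕ∞) fun p => fderiv ℝ f p (1, 0) := hF.clm_apply contDiff_const
  have hg2 : ContDiff ℝ (⊤ : ℕ∞) fun p => fderiv ℝ f p (0, 1) := hF.clm_apply contDiff_const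
  have e1 : fderiv ℝ (fun p => fderiv ℝ f p ((1 : ℝ), (0 : ℝ))) q =
      (fderiv ℝ (fderiv ℝ f) q).flip (1, 0) := by
    rw [fderiv_clm_apply (hF.differentiable (by simp) q) (differentiableAt_const _)]
    simp
  have e2 : fderiv ℝ (fun p => fderiv ℝ f p ((0 : ℝ), (1 : ℝ))) q =
      (fderiv ℝ (fderiv ℝ f) q).flip (0, 1) := by
    rw [fderiv_clm_apply (hF.differentiable (by simp) q) (differentiableAt_const _)]
    simp
  have hsymm := second_derivative_symmetric
    (f := f) (f' := fderiv ℝ f) (f'' := fderiv ℝ (fderiv ℝ f) q)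
    (fun y => (hf.differentiable (by simp) y).hasFDerivAt)
    ((hF.differentiable (by simp) q).hasFDerivAt) ((1 : ℝ), (0 : ℝ)) ((0 : ℝ), (1 : ℝ))
  rw [h1, h2, pdt_eq _ hg1 q, pdx_eq _ hg2 q, e1, e2]
  simpa using hsymm.symm

/-- Section 5: the hodograph-type mapping `x' = w`, `t' = t`, `u' = 1/u`,
`v' = v`, `w' = x` maps the linear system `w'_{x'} = u'`, `w'_t = −u'_{x'}`,
`v'_t = v'_{x'x'}` into the nonlinear first-generation potential system
`w_x = u`, `w_t = −u⁻²·u_x`, `v_t = ∂_x[u⁻²·v_x]`; consequently `u, v` solve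
`u_t = −∂_x[u⁻²·u_x]`, `v_t = ∂_x[u⁻²·v_x]`. -/
theorem section5_linearizing_mapping
    (w' v' : ℝ × ℝ → ℝ) (hw' : ContDiff ℝ (⊤ : ℕ∞) w') (hv' : ContDiff ℝ (⊤ : ℕ∞) v')
    (u' : ℝ × ℝ → ℝ) (hu' : u' = pdx w')
    (hne : ∀ p : ℝ × ℝ, u' p ≠ 0)
    (heqw : ∀ p : ℝ × ℝ, pdt w' p = -pdx u' p)
    (heqv : ∀ p : ℝ × ℝ, pdt v' p = pdxx v' p)
    (Φ : ℝ × ℝ → ℝ × ℝ) (hΦ : Φ = fun p => (w' p, p.2))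
    (Φinv : ℝ × ℝ → ℝ × ℝ)
    (hl : Function.LeftInverse Φinv Φ) (hr : Function.RightInverse Φinv Φ)
    (hΦinv : ContDiff ℝ (⊤ : ℕ∞) Φinv)
    (w : ℝ × ℝ → ℝ) (hwdef : w = fun p => (Φinv p).1)
    (u v : ℝ × ℝ → ℝ)
    (hudef : ∀ p : ℝ × ℝ, u p = 1 / u' (w p, p.2))
    (hvdef : ∀ p : ℝ × ℝ, v p = v' (w p, p.2)) :
    (∀ p : ℝ × ℝ, w' (w p, p.2) = p.1) ∧
    (∀ p : ℝ × ℝ, pdx w p = u p) ∧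
    (∀ p : ℝ × ℝ, pdt w p = -(((u p) ^ 2)⁻¹ * pdx u p)) ∧
    (∀ p : ℝ × ℝ, pdt v p = pdx (fun q => ((u q) ^ 2)⁻¹ * pdx v q) p) ∧
    (∀ p : ℝ × ℝ, pdt u p = -pdx (fun q => ((u q) ^ 2)⁻¹ * pdx u q) p) := by
  -- smoothness facts
  have hw : ContDiff ℝ (⊤ : ℕ∞) w := by rw [hwdef]; exact contDiff_fst.comp hΦinv
  have hu's : ContDiff ℝ (⊤ : ℕ∞) u' := by rw [hu']; exact contDiff_pdx w' hw'
  have hpdxu' : ContDiff ℝ (⊤ : ℕ∞) (pdx u') := contDiff_pdx u' hu's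
  have hpdxv' : ContDiff ℝ (⊤ : ℕ∞) (pdx v') := contDiff_pdx v' hv'
  -- the inverse map
  have hΦinv_eq : ∀ p : ℝ × ℝ, Φinv p = (w p, p.2) := by
    intro p
    have h := hr p
    simp only [hΦ] at h
    have h2 : (Φinv p).2 = p.2 := by
      have := congrArg Prod.snd h
      simpa using this
    have h1 : (Φinv p).1 = w p := by rw [hwdef]
    rw [← h1, ← h2]
  have hkey : ∀ p : ℝ × ℝ, w' (w p, p.2) = p.1 := by
    intro p
    have h := hr p
    simp only [hΦ] at h
    have h1 : w' (Φinv p) = p.1 := by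
      have := congrArg Prod.fst h
      simpa using this
    rwa [hΦinv_eq p] at h1
  -- slice derivatives of `w`
  have hWx : ∀ p : ℝ × ℝ, HasDerivAt (fun x => ((w (x, p.2), p.2) : ℝ × ℝ))
      ((pdx w p, 0) : ℝ × ℝ) p.1 := by
    intro p
    have h1 : HasDerivAt (fun x => w (x, p.2)) (pdx w p) p.1 := by
      have := hasDerivAt_sliceX w hw p.1 p.2
      rw [pdx_eq w hw p]
      simpa using this
    exact h1.prodMk (hasDerivAt_const _ _)
  have hWt : ∀ p : ℝ × ℝ, HasDerivAt (fun t => ((w (p.1, t), t) : ℝ × ℝ))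
      ((pdt w p, 1) : ℝ × ℝ) p.2 := by
    intro p
    have h1 : HasDerivAt (fun t => w (p.1, t)) (pdt w p) p.2 := by
      have := hasDerivAt_sliceT w hw p.1 p.2
      rw [pdt_eq w hw p]
      simpa using this
    exact h1.prodMk (hasDerivAt_id _)
  -- chain rule through the substitution (x,t) ↦ (w(x,t), t)
  have hcompX : ∀ (g : ℝ × ℝ → ℝ), ContDiff ℝ (⊤ : ℕ∞) g → ∀ p : ℝ × ℝ,
      HasDerivAt (fun x => g (w (x, p.2), p.2)) (pdx w p * pdx g (w p, p.2)) p.1 := by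
    intro g hg p
    have h := ((hg.differentiable (by simp)
        ((w (p.1, p.2), p.2))).hasFDerivAt).comp_hasDerivAt_of_eq p.1 (hWx p) rfl
    have e : fderiv ℝ g (w (p.1, p.2), p.2) ((pdx w p, 0) : ℝ × ℝ)
        = pdx w p * pdx g (w p, p.2) := by
      rw [clm_decomp, ← pdx_eq g hg]
      simp
    rw [e] at h
    exact h
  have hcompT : ∀ (g : ℝ × ℝ → ℝ), ContDiff ℝ (⊤ : ℕ∞) g → ∀ p : ℝ × ℝ,
      HasDerivAt (fun t => g (w (p.1, t), t))
        (pdt w p * pdx g (w p, p.2) + pdt g (w p, p.2)) p.2 := by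
    intro g hg p
    have h := ((hg.differentiable (by simp)
        ((w (p.1, p.2), p.2))).hasFDerivAt).comp_hasDerivAt_of_eq p.2 (hWt p) rfl
    have e : fderiv ℝ g (w (p.1, p.2), p.2) ((pdt w p, 1) : ℝ × ℝ)
        = pdt w p * pdx g (w p, p.2) + pdt g (w p, p.2) := by
      rw [clm_decomp, ← pdx_eq g hg, ← pdt_eq g hg]
      simp
    rw [e] at h
    exact h
  -- fundamental relations from differentiating w'(w(x,t),t) = x
  have E1 : ∀ p : ℝ × ℝ, pdx w p * u' (w p, p.2) = 1 := by
    intro p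
    have h := hcompX w' hw' p
    have hfun : (fun x => w' (w (x, p.2), p.2)) = fun x : ℝ => x :=
      funext fun x => hkey (x, p.2)
    rw [hfun] at h
    have h2 := h.unique (hasDerivAt_id p.1)
    rw [hu']
    exact h2
  have E2 : ∀ p : ℝ × ℝ, pdt w p * u' (w p, p.2) + pdt w' (w p, p.2) = 0 := by
    intro p
    have h := hcompT w' hw' p
    have hfun : (fun t => w' (w (p.1, t), t)) = fun _ : ℝ => p.1 :=
      funext fun t => hkey (p.1, t)
    rw [hfun] at h
    have h2 := h.unique (hasDerivAt_const p.2 p.1)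
    rw [hu']
    exact h2
  have hwx : ∀ p : ℝ × ℝ, pdx w p = (u' (w p, p.2))⁻¹ :=
    fun p => eq_inv_of_mul_eq_one_right (by rw [mul_comm]; exact E1 p)
  have hu_eq : ∀ p : ℝ × ℝ, u p = (u' (w p, p.2))⁻¹ := fun p => by
    rw [hudef p, one_div]
  have hwt : ∀ p : ℝ × ℝ, pdt w p = pdx u' (w p, p.2) * (u' (w p, p.2))⁻¹ := by
    intro p
    have h := E2 p
    have h2 := heqw (w p, p.2)
    have hne' := hne (w p, p.2)
    field_simp
    nlinarith [h, h2]
  -- derivatives of u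
  have hux : ∀ p : ℝ × ℝ, pdx u p =
      -(pdx w p * pdx u' (w p, p.2)) / (u' (w p, p.2)) ^ 2 := by
    intro p
    have h := (hcompX u' hu's p).inv (hne _)
    have hfun : (fun x => u' (w (x, p.2), p.2))⁻¹ = fun x => u (x, p.2) :=
      funext fun x => by simp only [Pi.inv_apply]; rw [hudef (x, p.2), one_div]
    rw [hfun] at h
    exact h.deriv
  have hut : ∀ p : ℝ × ℝ, pdt u p =
      -(pdt w p * pdx u' (w p, p.2) + pdt u' (w p, p.2)) / (u' (w p, p.2)) ^ 2 := by
    intro p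
    have h := (hcompT u' hu's p).inv (hne _)
    have hfun : (fun t => u' (w (p.1, t), t))⁻¹ = fun t => u (p.1, t) :=
      funext fun t => by simp only [Pi.inv_apply]; rw [hudef (p.1, t), one_div]
    rw [hfun] at h
    exact h.deriv
  -- derivatives of v
  have hvx : ∀ p : ℝ × ℝ, pdx v p = pdx w p * pdx v' (w p, p.2) := by
    intro p
    have h := hcompX v' hv' p
    have hfun : (fun x => v' (w (x, p.2), p.2)) = fun x => v (x, p.2) :=
      funext fun x => (hvdef (x, p.2)).symm
    rw [hfun] at h
    exact h.deriv
  have hvt : ∀ p : ℝ × ℝ, pdt v p =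
      pdt w p * pdx v' (w p, p.2) + pdt v' (w p, p.2) := by
    intro p
    have h := hcompT v' hv' p
    have hfun : (fun t => v' (w (p.1, t), t)) = fun t => v (p.1, t) :=
      funext fun t => (hvdef (p.1, t)).symm
    rw [hfun] at h
    exact h.deriv
  -- mixed partials: u'_t = -u'_{xx}
  have hmix : ∀ q : ℝ × ℝ, pdt u' q = -(pdx (pdx u') q) := by
    intro q
    have h1 : pdt u' q = pdx (pdt w') q := by
      rw [hu']; exact mixed_partials w' hw' q
    have h2 : pdt w' = fun r => -(pdx u' r) := funext fun r => by rw [heqw r]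
    rw [h1, h2]
    show deriv (fun x => -(pdx u' (x, q.2))) q.1 = -(pdx (pdx u') q)
    rw [deriv.fun_neg]
    rfl
  refine ⟨hkey, ?_, ?_, ?_, ?_⟩
  · intro p
    rw [hu_eq p, hwx p]
  · intro p
    have hne' := hne (w p, p.2)
    rw [hwt p, hu_eq p, hux p, hwx p]
    field_simp
  · intro p
    -- the function under pdx equals u'·v'_{x'} composed with the substitution
    have hG : (fun q => ((u q) ^ 2)⁻¹ * pdx v q)
        = fun q => u' (w q, q.2) * pdx v' (w q, q.2) := by
      funext q
      have hne' := hne (w q, q.2)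
      rw [hu_eq q, hvx q, hwx q]
      field_simp
    have hmul := (hcompX u' hu's p).mul (hcompX (pdx v') hpdxv' p)
    have hD : pdx (fun q => ((u q) ^ 2)⁻¹ * pdx v q) p
        = pdx w p * pdx u' (w p, p.2) * pdx v' (w (p.1, p.2), p.2)
          + u' (w (p.1, p.2), p.2) * (pdx w p * pdx (pdx v') (w p, p.2)) := by
      rw [hG]
      exact hmul.deriv
    have hne' := hne (w p, p.2)
    rw [hvt p, hD, hwt p, heqv (w p, p.2), hwx p]
    show pdx u' (w p, p.2) * (u' (w p, p.2))⁻¹ * pdx v' (w p, p.2)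
        + pdx (pdx v') (w p, p.2) = _
    simp only [Prod.mk.eta]
    field_simp
  · intro p
    have hH : (fun q => ((u q) ^ 2)⁻¹ * pdx u q)
        = fun q => -(pdx u' (w q, q.2) * (u' (w q, q.2))⁻¹) := by
      funext q
      have hne' := hne (w q, q.2)
      rw [hu_eq q, hux q, hwx q]
      field_simp
    have hmul := ((hcompX (pdx u') hpdxu' p).mul ((hcompX u' hu's p).inv (hne _))).neg
    have hD : pdx (fun q => ((u q) ^ 2)⁻¹ * pdx u q) p
        = -(pdx w p * pdx (pdx u') (w p, p.2) * (u' (w (p.1, p.2), p.2))⁻¹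
            + pdx u' (w (p.1, p.2), p.2)
              * (-(pdx w p * pdx u' (w p, p.2)) / u' (w (p.1, p.2), p.2) ^ 2)) := by
      rw [hH]
      exact hmul.deriv
    have hne' := hne (w p, p.2)
    rw [hut p, hD, hwt p, hmix (w p, p.2), hwx p]
    simp only [Prod.mk.eta]
    field_simp
    ring
end

section
/- (Finite symmetry generated by Γ_ψ.) Let u, w, v : ℝ² → ℝ be smooth functions of (x,t) with u vanishing nowhere, satisfying the potential system w_x = u, w_t = −u⁻²·u_x, v_t = ∂_x[u⁻²·v_x]. Let ψ : ℝ² → ℝ be a smooth function of (t, w) satisfying the linear heat equation ψ_t(t,s) = ψ_ss(t,s) for all (t,s) ∈ ℝ². Define ṽ(x,t) := v(x,t) + ψ(t, w(x,t)). Then ṽ_t = ∂_x[u⁻²·ṽ_x]; that is, (u, w, ṽ) again satisfies the potential system w_x = u, w_t = −u⁻²·u_x, ṽ_t = ∂_x[u⁻²·ṽ_x]. -/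
open Matrix

lemma hasDerivAt_fst (f : ℝ × ℝ → ℝ) (hf : ContDiff ℝ (⊤ : ℕ∞) f) (p : ℝ × ℝ) :
    HasDerivAt (fun x => f (x, p.2)) (fderiv ℝ f p ((1:ℝ), (0:ℝ))) p.1 := by
  have hF := (hf.differentiable (by simp) p).hasFDerivAt
  have hc : HasDerivAt (fun x : ℝ => (x, p.2)) ((1:ℝ), (0:ℝ)) p.1 :=
    (hasDerivAt_id p.1).prodMk (hasDerivAt_const p.1 p.2)
  exact hF.comp_hasDerivAt p.1 hc

lemma hasDerivAt_snd (f : ℝ × ℝ → ℝ) (hf : ContDiff ℝ (⊤ : ℕ∞) f) (p : ℝ × ℝ) :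
    HasDerivAt (fun t => f (p.1, t)) (fderiv ℝ f p ((0:ℝ), (1:ℝ))) p.2 := by
  have hF := (hf.differentiable (by simp) p).hasFDerivAt
  have hc : HasDerivAt (fun t : ℝ => (p.1, t)) ((0:ℝ), (1:ℝ)) p.2 :=
    (hasDerivAt_const p.2 p.1).prodMk (hasDerivAt_id p.2)
  exact hF.comp_hasDerivAt p.2 hc

lemma pdx_fderiv (f : ℝ × ℝ → ℝ) (hf : ContDiff ℝ (⊤ : ℕ∞) f) (p : ℝ × ℝ) :
    pdx f p = fderiv ℝ f p ((1:ℝ), (0:ℝ)) := (hasDerivAt_fst f hf p).deriv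

lemma pdt_fderiv (f : ℝ × ℝ → ℝ) (hf : ContDiff ℝ (⊤ : ℕ∞) f) (p : ℝ × ℝ) :
    pdt f p = fderiv ℝ f p ((0:ℝ), (1:ℝ)) := (hasDerivAt_snd f hf p).deriv

lemma hasDerivAt_pdx (f : ℝ × ℝ → ℝ) (hf : ContDiff ℝ (⊤ : ℕ∞) f) (p : ℝ × ℝ) :
    HasDerivAt (fun x => f (x, p.2)) (pdx f p) p.1 := by
  rw [pdx_fderiv f hf p]; exact hasDerivAt_fst f hf p

lemma hasDerivAt_pdt (f : ℝ × ℝ → ℝ) (hf : ContDiff ℝ (⊤ : ℕ∞) f) (p : ℝ × ℝ) :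
    HasDerivAt (fun t => f (p.1, t)) (pdt f p) p.2 := by
  rw [pdt_fderiv f hf p]; exact hasDerivAt_snd f hf p

lemma chain_x (f w : ℝ × ℝ → ℝ) (hf : ContDiff ℝ (⊤ : ℕ∞) f) (hw : ContDiff ℝ (⊤ : ℕ∞) w) (p : ℝ × ℝ) :
    HasDerivAt (fun x => f (p.2, w (x, p.2))) (pdx w p * pdt f (p.2, w p)) p.1 := by
  have hw1 : HasDerivAt (fun x => w (x, p.2)) (pdx w p) p.1 := hasDerivAt_pdx w hw p
  have hc : HasDerivAt (fun x => (p.2, w (x, p.2))) ((0:ℝ), pdx w p) p.1 :=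
    (hasDerivAt_const p.1 p.2).prodMk hw1
  have hF := (hf.differentiable (by simp) (p.2, w p)).hasFDerivAt
  have h := hF.comp_hasDerivAt p.1 hc
  have hval : fderiv ℝ f (p.2, w p) ((0:ℝ), pdx w p) = pdx w p * pdt f (p.2, w p) := by
    have h2 : ((0:ℝ), pdx w p) = pdx w p • ((0:ℝ), (1:ℝ)) := by simp
    rw [h2, _root_.map_smul, smul_eq_mul, ← pdt_fderiv f hf]
  rwa [hval] at h

lemma chain_t (f w : ℝ × ℝ → ℝ) (hf : ContDiff ℝ (⊤ : ℕ∞) f) (hw : ContDiff ℝ (⊤ : ℕ∞) w) (p : ℝ × ℝ) :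
    HasDerivAt (fun t => f (t, w (p.1, t)))
      (pdx f (p.2, w p) + pdt w p * pdt f (p.2, w p)) p.2 := by
  have hw1 : HasDerivAt (fun t => w (p.1, t)) (pdt w p) p.2 := hasDerivAt_pdt w hw p
  have hc : HasDerivAt (fun t => (t, w (p.1, t))) ((1:ℝ), pdt w p) p.2 :=
    (hasDerivAt_id p.2).prodMk hw1
  have hF := (hf.differentiable (by simp) (p.2, w p)).hasFDerivAt
  have h := hF.comp_hasDerivAt p.2 hc
  have hval : fderiv ℝ f (p.2, w p) ((1:ℝ), pdt w p)
      = pdx f (p.2, w p) + pdt w p * pdt f (p.2, w p) := by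
    have h2 : ((1:ℝ), pdt w p) = ((1:ℝ), (0:ℝ)) + pdt w p • ((0:ℝ), (1:ℝ)) := by simp
    rw [h2, _root_.map_add, _root_.map_smul, smul_eq_mul, ← pdx_fderiv f hf, ← pdt_fderiv f hf]
  rwa [hval] at h

/-- finite symmetry generated by `Γ_ψ`: if `(u,w,v)` solves the potential
system `w_x = u`, `w_t = −u⁻²·u_x`, `v_t = ∂_x[u⁻²·v_x]`, and `ψ = ψ(t,s)` solves the linear
heat equation `ψ_t = ψ_ss`, then `ṽ = v + ψ(t, w)` again satisfies
`ṽ_t = ∂_x[u⁻²·ṽ_x]`, so `(u, w, ṽ)` solves the same potential system. -/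
theorem finite_symmetry_heat_shift
    (u w v : ℝ × ℝ → ℝ)
    (hu : ContDiff ℝ (⊤ : ℕ∞) u) (hw : ContDiff ℝ (⊤ : ℕ∞) w) (hv : ContDiff ℝ (⊤ : ℕ∞) v)
    (hne : ∀ p : ℝ × ℝ, u p ≠ 0)
    (heq1 : ∀ p : ℝ × ℝ, pdx w p = u p)
    (heq2 : ∀ p : ℝ × ℝ, pdt w p = -(((u p) ^ 2)⁻¹ * pdx u p))
    (heq3 : ∀ p : ℝ × ℝ, pdt v p = pdx (fun q => ((u q) ^ 2)⁻¹ * pdx v q) p)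
    (ψ : ℝ × ℝ → ℝ) (hψ : ContDiff ℝ (⊤ : ℕ∞) ψ)
    (hheat : ∀ p : ℝ × ℝ, pdx ψ p = pdt (pdt ψ) p)
    (vt : ℝ × ℝ → ℝ) (hvt : ∀ p : ℝ × ℝ, vt p = v p + ψ (p.2, w p)) :
    (∀ p : ℝ × ℝ, pdx w p = u p) ∧
    (∀ p : ℝ × ℝ, pdt w p = -(((u p) ^ 2)⁻¹ * pdx u p)) ∧
    (∀ p : ℝ × ℝ, pdt vt p = pdx (fun q => ((u q) ^ 2)⁻¹ * pdx vt q) p) := by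
  refine ⟨heq1, heq2, ?_⟩
  intro p
  -- x-derivative of vt
  have hx_vt : ∀ q : ℝ × ℝ, HasDerivAt (fun x => vt (x, q.2))
      (pdx v q + pdx w q * pdt ψ (q.2, w q)) q.1 := by
    intro q
    have h := (hasDerivAt_pdx v hv q).add (chain_x ψ w hψ hw q)
    have he : (fun x => v (x, q.2) + ψ (q.2, w (x, q.2))) = (fun x => vt (x, q.2)) := by
      funext x; rw [hvt (x, q.2)]
    rwa [show ((fun x => v (x, q.2)) + fun x => ψ (q.2, w (x, q.2))) = fun x => vt (x, q.2) from he] at h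
  have hpdx_vt : ∀ q : ℝ × ℝ, pdx vt q = pdx v q + pdx w q * pdt ψ (q.2, w q) :=
    fun q => (hx_vt q).deriv
  -- rewrite the flux function
  have hfun : (fun q : ℝ × ℝ => ((u q) ^ 2)⁻¹ * pdx vt q)
      = (fun q : ℝ × ℝ => ((u q) ^ 2)⁻¹ * pdx v q + pdt ψ (q.2, w q) * (u q)⁻¹) := by
    funext q
    rw [hpdx_vt q, heq1 q]
    field_simp [hne p, hne q]
  -- t-derivative of vt at p
  have hT := (hasDerivAt_pdt v hv p).add (chain_t ψ w hψ hw p)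
  have heT : (fun t => v (p.1, t) + ψ (t, w (p.1, t))) = (fun t => vt (p.1, t)) := by
    funext t; rw [hvt (p.1, t)]
  rw [show ((fun t => v (p.1, t)) + fun t => ψ (t, w (p.1, t))) = fun t => vt (p.1, t) from heT] at hT
  have hTd : pdt vt p = pdt v p + (pdx ψ (p.2, w p) + pdt w p * pdt ψ (p.2, w p)) := hT.deriv
  rw [hTd, hfun]
  -- x-derivatives of the flux pieces at p
  have h1 : HasDerivAt (fun x => u (x, p.2)) (pdx u p) p.1 := hasDerivAt_pdx u hu p
  have h2 := h1.pow 2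
  have h3 := h2.inv (pow_ne_zero 2 (hne p))
  have h4 : HasDerivAt (fun x => pdx v (x, p.2)) (pdx (pdx v) p) p.1 :=
    hasDerivAt_pdx (pdx v) (contDiff_pdx v hv) p
  have h5 := h3.mul h4
  have h6 := chain_x (pdt ψ) w (contDiff_pdt ψ hψ) hw p
  have h7 := h1.inv (hne p)
  have h8 := h6.mul h7
  have h9 := h5.add h8
  have e1 : pdx (fun q : ℝ × ℝ => ((u q) ^ 2)⁻¹ * pdx v q) p = _ := h5.deriv
  have e9 : pdx (fun q : ℝ × ℝ =>
      ((u q) ^ 2)⁻¹ * pdx v q + pdt ψ (q.2, w q) * (u q)⁻¹) p = _ := h9.deriv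
  rw [e9, heq3 p, e1]
  simp only [Prod.mk.eta, Pi.pow_apply, Pi.inv_apply]
  rw [hheat (p.2, w p), heq1 p, heq2 p]
  field_simp [hne p]
end
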